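/- arXiv:2007.05602 — 3 statements merged into one kernel-verified Lean document; each statement's English description precedes it below -/
import Mathlib

section
/- The transversality counting function Ñ_F is submultiplicative: for all n, m ∈ ℕ, Ñ_F(n+m) ≤ Ñ_F(n)·Ñ_F(m). -/
/-!
The derivative cocycle factors as `D_z F^(n+m) = D_ẑ Fⁿ · D_z Fᵐ` with `ẑ = Fᵐ z`. If the
image of the unstable cone under `D_z F^(n+m)` contains `L`, then by forward invariance so does
its image under `D_ẑ Fⁿ`, and the image under `D_z Fᵐ` contains `(D_ẑ Fⁿ)⁻¹ L`. Hence
`z ↦ (ẑ, z)` injects the preimages counted by `Ñ_F(n+m, y, L)` into pairs counted by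
`Ñ_F(n, y, L)` and `Ñ_F(m, ẑ, (D_ẑ Fⁿ)⁻¹ L)`; the weight `|det|⁻¹` is multiplicative along the
factorisation, so summing the inner counts first gives `Ñ_F(n+m) ≤ Ñ_F(n) · Ñ_F(m)`.
-/

open scoped ENNReal Matrix

section Cocycle

variable {X M : Type*} [Monoid M] {F : X → X} {A : X → M} {An : X → ℕ → M}

theorem cocycle_add (hAn0 : ∀ z, An z 0 = 1) (hAnS : ∀ z k, An z (k + 1) = A (F^[k] z) * An z k)
    (z : X) (n m : ℕ) : An z (n + m) = An (F^[m] z) n * An z m := by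
  induction n with
  | zero => simp [hAn0]
  | succ n ih => rw [Nat.add_right_comm, hAnS, ih, hAnS, Function.iterate_add_apply, mul_assoc]

theorem cocycle_mem (S : Submonoid M) (hAn0 : ∀ z, An z 0 = 1)
    (hAnS : ∀ z k, An z (k + 1) = A (F^[k] z) * An z k) (hA : ∀ z, A z ∈ S) (z : X) (k : ℕ) :
    An z k ∈ S := by
  induction k with
  | zero => rw [hAn0]; exact S.one_mem
  | succ k ih => rw [hAnS]; exact S.mul_mem (hA _) ih

end Cocycle

namespace Matrix

variable {ι R : Type*} [Fintype ι] [CommRing R] {C : Set (ι → R)} {N N' : Matrix ι ι R}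
  {ℓ : ι → R}

theorem mem_mulVec_image_of_mem_mul_mulVec_image (hN' : Set.MapsTo N'.mulVec C C)
    (h : ℓ ∈ (N * N').mulVec '' C) : ℓ ∈ N.mulVec '' C := by
  obtain ⟨v, hv, rfl⟩ := h
  exact ⟨N' *ᵥ v, hN' hv, mulVec_mulVec _ _ _⟩

variable [DecidableEq ι]

def mapsToSubmonoid (C : Set (ι → R)) : Submonoid (Matrix ι ι R) where
  carrier := {N | Set.MapsTo N.mulVec C C}
  one_mem' _ hv := by simpa using hv
  mul_mem' hN hN' := by simpa [Set.MapsTo, ← mulVec_mulVec] using hN.comp hN'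

theorem inv_mulVec_mem_mulVec_image_of_mem_mul_mulVec_image (hN : IsUnit N)
    (h : ℓ ∈ (N * N').mulVec '' C) : N⁻¹ *ᵥ ℓ ∈ N'.mulVec '' C := by
  obtain ⟨v, hv, rfl⟩ := h
  refine ⟨v, hv, ?_⟩
  rw [mulVec_mulVec, ← mul_assoc, nonsing_inv_mul _ ((isUnit_iff_isUnit_det _).1 hN), one_mul]

theorem inv_mulVec_ne_zero (hN : IsUnit N) (hℓ : ℓ ≠ 0) : N⁻¹ *ᵥ ℓ ≠ 0 := by
  intro h
  apply hℓ
  rw [← one_mulVec ℓ, ← mul_nonsing_inv _ ((isUnit_iff_isUnit_det _).1 hN), ← mulVec_mulVec, h,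
    mulVec_zero]

end Matrix

section TransversalityCount

variable {X ι : Type*} [Fintype ι] [DecidableEq ι]

/-- `Ñ_F(k, y, L)` for the line `L` spanned by `ℓ`, with `An z k` playing `D_z Fᵏ`. -/
noncomputable def transversalityCount (F : X → X) (An : X → ℕ → Matrix ι ι ℝ) (C : Set (ι → ℝ))
    (k : ℕ) (y : X) (ℓ : ι → ℝ) : ℝ≥0∞ :=
  ∑' z : {z : X // F^[k] z = y ∧ ℓ ∈ (An z k).mulVec '' C}, ENNReal.ofReal |(An z k).det|⁻¹

variable {F : X → X} {An : X → ℕ → Matrix ι ι ℝ} {C : Set (ι → ℝ)}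

theorem transversalityCount_add_le (hadd : ∀ z n m, An z (n + m) = An (F^[m] z) n * An z m)
    (hunit : ∀ z k, IsUnit (An z k)) (hC : ∀ z k, Set.MapsTo (An z k).mulVec C C)
    (n m : ℕ) (y : X) (ℓ : ι → ℝ) :
    transversalityCount F An C (n + m) y ℓ ≤
      ∑' w : {w : X // F^[n] w = y ∧ ℓ ∈ (An w n).mulVec '' C},
        ENNReal.ofReal |(An w n).det|⁻¹ *
          transversalityCount F An C m w ((An w n)⁻¹ *ᵥ ℓ) := by
  have hsplit : ∀ z : {z : X // F^[n + m] z = y ∧ ℓ ∈ (An z (n + m)).mulVec '' C},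
      F^[n] (F^[m] z) = y ∧ ℓ ∈ (An (F^[m] z) n).mulVec '' C ∧
        (An (F^[m] z) n)⁻¹ *ᵥ ℓ ∈ (An z m).mulVec '' C := by
    rintro ⟨z, hzy, hℓ⟩
    rw [hadd] at hℓ
    exact ⟨by rwa [← Function.iterate_add_apply],
      Matrix.mem_mulVec_image_of_mem_mul_mulVec_image (hC z m) hℓ,
      Matrix.inv_mulVec_mem_mulVec_image_of_mem_mul_mulVec_image (hunit _ n) hℓ⟩
  let Φ (z : {z : X // F^[n + m] z = y ∧ ℓ ∈ (An z (n + m)).mulVec '' C}) :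
      Σ w : {w : X // F^[n] w = y ∧ ℓ ∈ (An w n).mulVec '' C},
        {z : X // F^[m] z = w ∧ (An w n)⁻¹ *ᵥ ℓ ∈ (An z m).mulVec '' C} :=
    ⟨⟨F^[m] z, (hsplit z).1, (hsplit z).2.1⟩, ⟨z, rfl, (hsplit z).2.2⟩⟩
  have hΦ : Function.Injective Φ := fun a b hab => Subtype.ext (congrArg (fun p => (p.2 : X)) hab)
  calc transversalityCount F An C (n + m) y ℓ
      = ∑' z, ENNReal.ofReal |(An (Φ z).1 n).det|⁻¹ * ENNReal.ofReal |(An (Φ z).2 m).det|⁻¹ := by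
        refine tsum_congr fun z => ?_
        rw [← ENNReal.ofReal_mul (by positivity), ← mul_inv, ← abs_mul, ← Matrix.det_mul, ← hadd]
    _ ≤ ∑' p : Σ w : {w : X // F^[n] w = y ∧ ℓ ∈ (An w n).mulVec '' C},
          {z : X // F^[m] z = w ∧ (An w n)⁻¹ *ᵥ ℓ ∈ (An z m).mulVec '' C},
          ENNReal.ofReal |(An p.1 n).det|⁻¹ * ENNReal.ofReal |(An p.2 m).det|⁻¹ :=
        ENNReal.tsum_comp_le_tsum_of_injective hΦ _
    _ = _ := by
        rw [ENNReal.tsum_sigma']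
        simp_rw [ENNReal.tsum_mul_left]
        rfl

end TransversalityCount

theorem transversality_submultiplicative_general
    {X : Type*} (F : X → X)
    (A : X → Matrix (Fin 2) (Fin 2) ℝ)
    (hdet : ∀ z, (A z).det ≠ 0)
    (Cu : Set (Fin 2 → ℝ))
    (hinv : ∀ (z : X) (v : Fin 2 → ℝ), v ∈ Cu → (A z).mulVec v ∈ Cu)
    (An : X → ℕ → Matrix (Fin 2) (Fin 2) ℝ)
    (hAn0 : ∀ z, An z 0 = 1)
    (hAnS : ∀ z k, An z (k + 1) = A (F^[k] z) * An z k)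
    (Ntil : ℕ → ℝ≥0∞)
    (hNtil : ∀ k, Ntil k =
      ⨆ (y : X) (ℓ : {v : Fin 2 → ℝ // v ≠ 0}),
        ∑' z : {z : X // F^[k] z = y ∧ (ℓ : Fin 2 → ℝ) ∈ (An z k).mulVec '' Cu},
          ENNReal.ofReal (|(An (z : X) k).det|⁻¹)) :
    ∀ n m : ℕ, Ntil (n + m) ≤ Ntil n * Ntil m := by
  intro n m
  have hunit : ∀ z k, IsUnit (An z k) := cocycle_mem (IsUnit.submonoid _) hAn0 hAnS
    fun z => (Matrix.isUnit_iff_isUnit_det _).2 (hdet z).isUnit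
  have hC : ∀ z k, Set.MapsTo (An z k).mulVec Cu Cu :=
    cocycle_mem (Matrix.mapsToSubmonoid Cu) hAn0 hAnS fun z v => hinv z v
  have hle : ∀ k y ℓ, ℓ ≠ 0 → transversalityCount F An Cu k y ℓ ≤ Ntil k := fun k y ℓ hℓ => by
    rw [hNtil k]
    exact le_iSup₂_of_le y ⟨ℓ, hℓ⟩ le_rfl
  rw [hNtil (n + m)]
  refine iSup₂_le fun y ℓ => ?_
  calc transversalityCount F An Cu (n + m) y ℓ
      ≤ ∑' w : {w : X // F^[n] w = y ∧ ↑ℓ ∈ (An w n).mulVec '' Cu},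
          ENNReal.ofReal |(An w n).det|⁻¹ * transversalityCount F An Cu m w ((An w n)⁻¹ *ᵥ ℓ) :=
        transversalityCount_add_le (cocycle_add hAn0 hAnS) hunit hC n m y ℓ
    _ ≤ ∑' w : {w : X // F^[n] w = y ∧ ↑ℓ ∈ (An w n).mulVec '' Cu},
          ENNReal.ofReal |(An w n).det|⁻¹ * Ntil m :=
        ENNReal.tsum_le_tsum fun w =>
          mul_le_mul_right (hle m w _ (Matrix.inv_mulVec_ne_zero (hunit w n) ℓ.2)) _
    _ = transversalityCount F An Cu n y ℓ * Ntil m := ENNReal.tsum_mul_right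
    _ ≤ Ntil n * Ntil m := mul_le_mul_left (hle n y ℓ ℓ.2) _

/-- Submultiplicativity of the transversality counting function:
`Ñ_F(n+m) ≤ Ñ_F(n)·Ñ_F(m)`.  Here `F : X → X` is a local diffeomorphism whose
derivative cocycle is `An z n = D_z Fⁿ` (with one-step derivative `A`, everywhere
invertible), `Cu ⊆ ℝ²` is a forward invariant cone closed under scalars, and
`Ñ_F(n) = sup_y sup_L Σ_{z ∈ F⁻ⁿ(y), D_zFⁿ(Cu) ⊇ L} |det D_z Fⁿ|⁻¹`,
where a line `L` through the origin is represented by a nonzero vector `ℓ`. -/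
theorem transversality_submultiplicative
    {X : Type*} (F : X → X)
    (A : X → Matrix (Fin 2) (Fin 2) ℝ)
    (hdet : ∀ z, (A z).det ≠ 0)
    (Cu : Set (Fin 2 → ℝ))
    (hscal : ∀ (t : ℝ) (v : Fin 2 → ℝ), v ∈ Cu → t • v ∈ Cu)
    (hinv : ∀ (z : X) (v : Fin 2 → ℝ), v ∈ Cu → (A z).mulVec v ∈ Cu)
    (An : X → ℕ → Matrix (Fin 2) (Fin 2) ℝ)
    (hAn0 : ∀ z, An z 0 = 1)
    (hAnS : ∀ z k, An z (k + 1) = A (F^[k] z) * An z k)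
    (Ntil : ℕ → ℝ≥0∞)
    (hNtil : ∀ k, Ntil k =
      ⨆ (y : X) (ℓ : {v : Fin 2 → ℝ // v ≠ 0}),
        ∑' z : {z : X // F^[k] z = y ∧ (ℓ : Fin 2 → ℝ) ∈ (An z k).mulVec '' Cu},
          ENNReal.ofReal (|(An (z : X) k).det|⁻¹)) :
    ∀ n m : ℕ, Ntil (n + m) ≤ Ntil n * Ntil m :=
  transversality_submultiplicative_general F A hdet Cu hinv An hAn0 hAnS Ntil hNtil
end

section
/- Let f : T → T be a C¹ covering map of the circle with topological degree d > 1 and f'(x) > 0 everywhere, let ω : T → ℝ be continuous, and suppose there is a continuous function ũ : T → ℝ satisfying ũ(f(x)) = (ω'(x) + ũ(x))/f'(x) for all x (where ω is C¹). Then ∫_T ũ(x) dx = 0, and consequently, setting Ψ(x) = ∫₀ˣ ũ(z) dz, there exists a constant c ∈ ℝ such that ω(x) = Ψ(f(x)) − Ψ(x) + c for all x; i.e., ω is an f-coboundary up to a constant. -/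
/-! Since `Ψ' = ũ`, the slope equation `ũ(f x) f'(x) = ω'(x) + ũ(x)` says exactly that
`Ψ ∘ f − Ψ − ω` has derivative zero, so `ω = Ψ ∘ f − Ψ + c`. Comparing this identity at `0` and
at `1`, where `f` has moved by `d` periods of `ũ` but `x` by only one, gives `(d − 1) ∫₀¹ ũ = 0`. -/

open MeasureTheory intervalIntegral Function

theorem exists_eq_comp_sub_add_const_of_hasDerivAt {f ω Ψ u f' ω' : ℝ → ℝ}
    (hΨ : ∀ x, HasDerivAt Ψ (u x) x) (hf : ∀ x, HasDerivAt f (f' x) x)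
    (hω : ∀ x, HasDerivAt ω (ω' x) x) (h : ∀ x, u (f x) * f' x = ω' x + u x) :
    ∃ c, ∀ x, ω x = Ψ (f x) - Ψ x + c := by
  have hderiv : ∀ x, HasDerivAt (fun x => ω x - (Ψ (f x) - Ψ x)) 0 x := fun x => by
    refine ((hω x).sub (((hΨ (f x)).comp x (hf x)).sub (hΨ x))).congr_deriv ?_
    rw [h x]
    ring
  refine ⟨ω 0 - (Ψ (f 0) - Ψ 0), fun x => ?_⟩
  have := is_const_of_deriv_eq_zero (fun x => (hderiv x).differentiableAt)
    (fun x => (hderiv x).deriv) x 0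
  linarith

theorem Function.Periodic.integral_zero_add_zsmul {E : Type*} [NormedAddCommGroup E]
    [NormedSpace ℝ E] {u : ℝ → E} {T : ℝ} (hu : Periodic u T)
    (h_int : ∀ a b, IntervalIntegrable u volume a b) (x : ℝ) (n : ℤ) :
    ∫ t in 0..x + n • T, u t = (∫ t in 0..x, u t) + n • ∫ t in 0..T, u t := by
  rw [← integral_add_adjacent_intervals (h_int 0 x) (h_int x _),
    hu.intervalIntegral_add_zsmul_eq n x h_int, hu.intervalIntegral_add_eq x 0, zero_add]

theorem integral_eq_zero_of_eq_comp_sub_add_const {f ω u : ℝ → ℝ} {T c : ℝ} {n : ℤ}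
    (hn : n ≠ 1) (hf : ∀ x, f (x + T) = f x + n * T) (hω : Periodic ω T) (hu : Periodic u T)
    (h_int : ∀ a b, IntervalIntegrable u volume a b)
    (hc : ∀ x, ω x = (∫ t in 0..f x, u t) - (∫ t in 0..x, u t) + c) :
    ∫ t in 0..T, u t = 0 := by
  have hfT : f T = f 0 + n • T := by simpa [zsmul_eq_mul] using hf 0
  have h := hc T
  rw [hω.eq, hc 0, hfT, hu.integral_zero_add_zsmul h_int, zsmul_eq_mul, integral_same] at h
  have hn' : (n : ℝ) - 1 ≠ 0 := sub_ne_zero.mpr (by exact_mod_cast hn)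
  have hI : ((n : ℝ) - 1) * ∫ t in 0..T, u t = 0 := by linarith
  exact (mul_eq_zero.mp hI).resolve_left hn'

/-- Let `f` be (a lift of) a `C¹` covering map of the circle of
degree `d > 1` with `f' > 0`, `ω` a `C¹` periodic function, and `ũ` a continuous
periodic solution of `ũ(f x) = (ω'(x) + ũ(x))/f'(x)`.  Then `∫₀¹ ũ = 0` and,
with `Ψ(x) = ∫₀ˣ ũ`, there is `c ∈ ℝ` with `ω = Ψ∘f − Ψ + c`:  `ω` is an
`f`-coboundary up to a constant. -/
theorem coboundary_of_slope_equation (d : ℕ) (hd : 1 < d)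
    (f ω u : ℝ → ℝ)
    (hf : ContDiff ℝ 1 f) (hfper : ∀ x, f (x + 1) = f x + d)
    (hf' : ∀ x, 0 < deriv f x)
    (hω : ContDiff ℝ 1 ω) (hωper : ∀ x, ω (x + 1) = ω x)
    (hu : Continuous u) (huper : ∀ x, u (x + 1) = u x)
    (heq : ∀ x, u (f x) = (deriv ω x + u x) / deriv f x) :
    (∫ x in (0:ℝ)..1, u x) = 0 ∧
    ∃ c : ℝ, ∀ x, ω x = (∫ t in (0:ℝ)..(f x), u t) - (∫ t in (0:ℝ)..x, u t) + c := by
  obtain ⟨c, hc⟩ := exists_eq_comp_sub_add_const_of_hasDerivAt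
    (fun x => (hu.integral_hasStrictDerivAt 0 x).hasDerivAt)
    (fun x => (hf.differentiable one_ne_zero x).hasDerivAt)
    (fun x => (hω.differentiable one_ne_zero x).hasDerivAt)
    (fun x => by rw [heq x, div_mul_cancel₀ _ (hf' x).ne'])
  have hd1 : (d : ℤ) ≠ 1 := by exact_mod_cast hd.ne'
  exact ⟨integral_eq_zero_of_eq_comp_sub_add_const hd1 (by simpa using hfper) hωper huper
    hu.intervalIntegrable hc, c, hc⟩
end

section
/- There is a universal constant C > 0 with the following property. For every u ∈ C¹(T²), every x ∈ T, every φ ∈ C⁰(T) with ‖φ‖_∞ ≤ 1, and every ℓ ∈ (0,1]: |∫_T φ(t) u(x,t) dt| ≤ ℓ⁻¹ ‖u‖_{L¹(T²)} + C·ℓ^{1/2}·‖u‖_{H¹(T²)}. (One may take C = 2/3.) -/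
/-
Write `F s = ∫₀¹ φ(t) u(s,t) dt`. For `s ∈ [x, x+ℓ]` the fundamental theorem of calculus in the
first variable gives `|F x| ≤ |F s| + J` with `J = ∫ₓ^{x+ℓ} ∫₀¹ |∂₁u|`; averaging over `s`
gives `|F x| ≤ ℓ⁻¹ ∫ₓ^{x+ℓ} |F| + J`. By periodicity in the first variable the strip
`[x, x+ℓ] × [0,1]` carries at most the mass of the unit square, so the first term is at most
`ℓ⁻¹ ‖u‖_{L¹}`, and Cauchy–Schwarz on the strip, of area `ℓ`, bounds `J` by `√ℓ ‖∂₁u‖_{L²}`.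
This gives the estimate with `C = 1`.
-/

open MeasureTheory Set

theorem integral_abs_le_sqrt_measureReal_mul_sqrt {α : Type*} [MeasurableSpace α] {μ : Measure α}
    [IsFiniteMeasure μ] {f : α → ℝ} (hf : MemLp f 2 μ) :
    ∫ a, |f a| ∂μ ≤ √(μ.real univ) * √(∫ a, f a ^ 2 ∂μ) := by
  have h := integral_mul_le_Lp_mul_Lq_of_nonneg (μ := μ) Real.HolderConjugate.two_two
    (f := fun _ => (1:ℝ)) (g := fun a => |f a|) (ae_of_all _ fun _ => zero_le_one)
    (ae_of_all _ fun _ => abs_nonneg _) (by simpa using memLp_const (1:ℝ))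
    (by rw [ENNReal.ofReal_ofNat]; exact hf.abs)
  simpa [Real.sqrt_eq_rpow, sq_abs] using h

theorem intervalIntegral_abs_le_sqrt_mul_sqrt {f : ℝ → ℝ} (hf : Continuous f) {a b : ℝ}
    (hab : a ≤ b) :
    ∫ t in a..b, |f t| ≤ √(b - a) * √(∫ t in a..b, f t ^ 2) := by
  have hf2 : MemLp f 2 (volume.restrict (Ioc a b)) :=
    (memLp_two_iff_integrable_sq hf.aestronglyMeasurable).2 (hf.pow 2).integrableOn_Ioc
  simpa [intervalIntegral.integral_of_le hab, hab] using
    integral_abs_le_sqrt_measureReal_mul_sqrt hf2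

theorem intervalIntegral_intervalIntegral_abs_le_sqrt_mul_sqrt {f : ℝ → ℝ → ℝ}
    (hf : Continuous (Function.uncurry f)) {a b c d : ℝ} (hab : a ≤ b) (hcd : c ≤ d) :
    ∫ s in a..b, ∫ t in c..d, |f s t| ≤
      √((b - a) * (d - c)) * √(∫ s in a..b, ∫ t in c..d, f s t ^ 2) := by
  have hsq_nonneg : ∀ s, 0 ≤ ∫ t in c..d, f s t ^ 2 := fun s =>
    intervalIntegral.integral_nonneg hcd fun t _ => sq_nonneg _
  calc ∫ s in a..b, ∫ t in c..d, |f s t|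
      ≤ ∫ s in a..b, √(d - c) * |√(∫ t in c..d, f s t ^ 2)| := by
        refine intervalIntegral.integral_mono_on hab
          (Continuous.intervalIntegrable (by fun_prop) _ _)
          (Continuous.intervalIntegrable (by fun_prop) _ _) fun s _ => ?_
        rw [abs_of_nonneg (Real.sqrt_nonneg _)]
        exact intervalIntegral_abs_le_sqrt_mul_sqrt (by fun_prop) hcd
    _ ≤ √(d - c) * (√(b - a) * √(∫ s in a..b, √(∫ t in c..d, f s t ^ 2) ^ 2)) := by
        rw [intervalIntegral.integral_const_mul]
        gcongr
        exact intervalIntegral_abs_le_sqrt_mul_sqrt (by fun_prop) hab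
    _ = √((b - a) * (d - c)) * √(∫ s in a..b, ∫ t in c..d, f s t ^ 2) := by
        simp_rw [Real.sq_sqrt (hsq_nonneg _), Real.sqrt_mul' _ (sub_nonneg.2 hcd)]
        ring

theorem abs_intervalIntegral_mul_le_intervalIntegral_abs {φ g : ℝ → ℝ} (hφ : Continuous φ)
    (hφ_le : ∀ t, |φ t| ≤ 1) (hg : Continuous g) {a b : ℝ} (hab : a ≤ b) :
    |∫ t in a..b, φ t * g t| ≤ ∫ t in a..b, |g t| := by
  refine (intervalIntegral.abs_integral_le_integral_abs hab).trans <|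
    intervalIntegral.integral_mono_on hab (Continuous.intervalIntegrable (by fun_prop) _ _)
      (Continuous.intervalIntegrable (by fun_prop) _ _) fun t _ => ?_
  rw [abs_mul]
  exact mul_le_of_le_one_left (abs_nonneg _) (hφ_le t)

theorem le_inv_mul_intervalIntegral_add {g : ℝ → ℝ} (hg : Continuous g) {c J a ℓ : ℝ} (hℓ : 0 < ℓ)
    (h : ∀ s ∈ Icc a (a + ℓ), c ≤ g s + J) :
    c ≤ ℓ⁻¹ * (∫ s in a..a + ℓ, g s) + J := by
  have hmono : ∫ _ in a..a + ℓ, c ≤ ∫ s in a..a + ℓ, (g s + J) :=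
    intervalIntegral.integral_mono_on (by linarith) intervalIntegrable_const
      (Continuous.intervalIntegrable (by fun_prop) _ _) h
  rw [intervalIntegral.integral_add (hg.intervalIntegrable _ _) intervalIntegrable_const] at hmono
  simp only [intervalIntegral.integral_const, add_sub_cancel_left, smul_eq_mul] at hmono
  rw [← mul_le_mul_iff_right₀ hℓ, mul_add, ← mul_assoc, mul_inv_cancel₀ hℓ.ne', one_mul]
  exact hmono

theorem Function.Periodic.intervalIntegral_le_of_le_period {G : ℝ → ℝ} {T : ℝ}
    (hG : Function.Periodic G T) (hcont : Continuous G) (hnonneg : 0 ≤ G) (x : ℝ) {ℓ : ℝ}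
    (hℓ : 0 ≤ ℓ) (hℓT : ℓ ≤ T) :
    ∫ s in x..x + ℓ, G s ≤ ∫ s in 0..T, G s := by
  calc ∫ s in x..x + ℓ, G s ≤ ∫ s in x..x + T, G s :=
        intervalIntegral.integral_mono_interval le_rfl (by linarith) (by linarith)
          (Filter.Eventually.of_forall hnonneg) (hcont.intervalIntegrable _ _)
    _ = ∫ s in 0..T, G s := by simpa using hG.intervalIntegral_add_eq x 0

theorem setIntegral_Ico_prod_Ico_eq_intervalIntegral {f : ℝ × ℝ → ℝ} (hf : Continuous f)
    {a b c d : ℝ} (hab : a ≤ b) (hcd : c ≤ d) :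
    ∫ p in Ico a b ×ˢ Ico c d, f p = ∫ s in a..b, ∫ t in c..d, f (s, t) := by
  have hint : IntegrableOn f (Ico a b ×ˢ Ico c d) (volume.prod volume) := by
    rw [← Measure.volume_eq_prod]
    exact (hf.continuousOn.integrableOn_compact (isCompact_Icc.prod isCompact_Icc)).mono_set
      (prod_mono Ico_subset_Icc_self Ico_subset_Icc_self)
  rw [Measure.volume_eq_prod, setIntegral_prod _ hint, intervalIntegral.integral_of_le hab,
    integral_Ico_eq_integral_Ioc]
  simp_rw [intervalIntegral.integral_of_le hcd, integral_Ico_eq_integral_Ioc]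

theorem Function.Periodic.fderiv {𝕜 E F : Type*} [NontriviallyNormedField 𝕜]
    [NormedAddCommGroup E] [NormedSpace 𝕜 E] [NormedAddCommGroup F] [NormedSpace 𝕜 F]
    {u : E → F} {a : E} (hu : Function.Periodic u a) :
    Function.Periodic (fderiv 𝕜 u) a := fun p => by
  rw [← fderiv_comp_add_right, show (fun q => u (q + a)) = u from funext hu]

theorem intervalIntegral_fderiv_apply_fst_eq_sub {u : ℝ × ℝ → ℝ} (hu : ContDiff ℝ 1 u)
    (a b t : ℝ) :
    ∫ σ in a..b, fderiv ℝ u (σ, t) (1, 0) = u (b, t) - u (a, t) := by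
  have hderiv : ∀ σ, HasDerivAt (fun σ => u (σ, t)) (fderiv ℝ u (σ, t) (1, 0)) σ := fun σ =>
    ((hu.differentiable one_ne_zero _).hasFDerivAt).comp_hasDerivAt σ
      ((hasDerivAt_id σ).prodMk (hasDerivAt_const σ t))
  exact intervalIntegral.integral_eq_sub_of_hasDerivAt (fun σ _ => hderiv σ)
    (Continuous.intervalIntegrable (by fun_prop) _ _)

theorem abs_sub_intervalIntegral_mul_le {u : ℝ × ℝ → ℝ} (hu : ContDiff ℝ 1 u) {φ : ℝ → ℝ}
    (hφ : Continuous φ) (hφ_le : ∀ t, |φ t| ≤ 1) {c d : ℝ} (hcd : c ≤ d) {x ℓ s : ℝ}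
    (hs : s ∈ Icc x (x + ℓ)) :
    |(∫ t in c..d, φ t * u (x, t)) - ∫ t in c..d, φ t * u (s, t)| ≤
      ∫ σ in x..x + ℓ, ∫ t in c..d, |fderiv ℝ u (σ, t) (1, 0)| := by
  rw [← intervalIntegral.integral_sub (Continuous.intervalIntegrable (by fun_prop) _ _)
    (Continuous.intervalIntegrable (by fun_prop) _ _)]
  calc |∫ t in c..d, (φ t * u (x, t) - φ t * u (s, t))|
      = |∫ t in c..d, -φ t * ∫ σ in x..s, fderiv ℝ u (σ, t) (1, 0)| := by
        simp_rw [intervalIntegral_fderiv_apply_fst_eq_sub hu]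
        congr 1; refine intervalIntegral.integral_congr fun t _ => ?_; ring
    _ ≤ ∫ t in c..d, |∫ σ in x..s, fderiv ℝ u (σ, t) (1, 0)| :=
        abs_intervalIntegral_mul_le_intervalIntegral_abs (by fun_prop) (by simpa using hφ_le)
          (by fun_prop) hcd
    _ ≤ ∫ t in c..d, ∫ σ in x..x + ℓ, |fderiv ℝ u (σ, t) (1, 0)| := by
        refine intervalIntegral.integral_mono_on hcd
          (Continuous.intervalIntegrable (by fun_prop) _ _)
          (Continuous.intervalIntegrable (by fun_prop) _ _) fun t _ => ?_
        refine (intervalIntegral.abs_integral_le_integral_abs hs.1).trans ?_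
        exact intervalIntegral.integral_mono_interval le_rfl hs.1 hs.2
          (Filter.Eventually.of_forall fun _ => abs_nonneg _)
          (Continuous.intervalIntegrable (by fun_prop) _ _)
    _ = ∫ σ in x..x + ℓ, ∫ t in c..d, |fderiv ℝ u (σ, t) (1, 0)| := by
        refine (intervalIntegral_intervalIntegral_swap ?_).symm
        exact (Continuous.continuousOn (by fun_prop)).integrableOn_compact
          (isCompact_uIcc.prod isCompact_uIcc) |>.mono_set
          (prod_mono uIoc_subset_uIcc uIoc_subset_uIcc)

theorem intervalIntegral_strip_le_setIntegral_unitSquare {g : ℝ × ℝ → ℝ} (hg : Continuous g)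
    (hnonneg : 0 ≤ g) (hper : ∀ s t, g (s + 1, t) = g (s, t)) (x : ℝ) {ℓ : ℝ}
    (hℓ : ℓ ∈ Icc (0 : ℝ) 1) :
    ∫ s in x..x + ℓ, ∫ t in (0 : ℝ)..1, g (s, t) ≤ ∫ p in Ico (0 : ℝ) 1 ×ˢ Ico (0 : ℝ) 1, g p := by
  rw [setIntegral_Ico_prod_Ico_eq_intervalIntegral hg zero_le_one zero_le_one]
  refine Function.Periodic.intervalIntegral_le_of_le_period (fun s => ?_) (by fun_prop)
    (fun s => intervalIntegral.integral_nonneg zero_le_one fun t _ => hnonneg _) x hℓ.1 hℓ.2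
  simp only [hper]

theorem abs_intervalIntegral_mul_le_inv_mul_add {u : ℝ × ℝ → ℝ} (hu : ContDiff ℝ 1 u)
    {φ : ℝ → ℝ} (hφ : Continuous φ) (hφ_le : ∀ t, |φ t| ≤ 1) {c d : ℝ} (hcd : c ≤ d) (x : ℝ)
    {ℓ : ℝ} (hℓ : 0 < ℓ) :
    |∫ t in c..d, φ t * u (x, t)| ≤
      ℓ⁻¹ * (∫ s in x..x + ℓ, |∫ t in c..d, φ t * u (s, t)|) +
        ∫ σ in x..x + ℓ, ∫ t in c..d, |fderiv ℝ u (σ, t) (1, 0)| :=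
  le_inv_mul_intervalIntegral_add (by fun_prop) hℓ fun s hs => by
    have := abs_sub_intervalIntegral_mul_le hu hφ hφ_le hcd hs
    linarith [abs_sub_abs_le_abs_sub (∫ t in c..d, φ t * u (x, t)) (∫ t in c..d, φ t * u (s, t))]

theorem intervalIntegral_strip_abs_intervalIntegral_mul_le {u : ℝ × ℝ → ℝ} (hu : Continuous u)
    (hu_per : ∀ x y, u (x + 1, y) = u (x, y)) {φ : ℝ → ℝ} (hφ : Continuous φ)
    (hφ_le : ∀ t, |φ t| ≤ 1) (x : ℝ) {ℓ : ℝ} (hℓ : ℓ ∈ Icc (0 : ℝ) 1) :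
    ∫ s in x..x + ℓ, |∫ t in (0 : ℝ)..1, φ t * u (s, t)| ≤
      ∫ p in Ico (0 : ℝ) 1 ×ˢ Ico (0 : ℝ) 1, |u p| := by
  refine le_trans ?_ (intervalIntegral_strip_le_setIntegral_unitSquare (by fun_prop)
    (fun _ => abs_nonneg _) (fun s t => by simp only [hu_per]) x hℓ)
  exact intervalIntegral.integral_mono_on (by linarith [hℓ.1])
    (Continuous.intervalIntegrable (by fun_prop) _ _)
    (Continuous.intervalIntegrable (by fun_prop) _ _) fun s _ =>
      abs_intervalIntegral_mul_le_intervalIntegral_abs hφ hφ_le (by fun_prop) zero_le_one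

theorem intervalIntegral_strip_abs_fderiv_le {u : ℝ × ℝ → ℝ} (hu : ContDiff ℝ 1 u)
    (hu_per : ∀ x y, u (x + 1, y) = u (x, y)) (x : ℝ) {ℓ : ℝ} (hℓ : ℓ ∈ Icc (0 : ℝ) 1) :
    ∫ σ in x..x + ℓ, ∫ t in (0 : ℝ)..1, |fderiv ℝ u (σ, t) (1, 0)| ≤
      √ℓ * √(∫ p in Ico (0 : ℝ) 1 ×ˢ Ico (0 : ℝ) 1, fderiv ℝ u p (1, 0) ^ 2) := by
  have hu_periodic : Function.Periodic u (1, 0) := fun p => by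
    rw [show p + (1, 0) = (p.1 + 1, p.2) by ext <;> simp]
    exact hu_per p.1 p.2
  have hD_per (s t : ℝ) : fderiv ℝ u (s + 1, t) (1, 0) ^ 2 = fderiv ℝ u (s, t) (1, 0) ^ 2 := by
    simpa using congrArg (· (1, 0) ^ 2) (hu_periodic.fderiv (𝕜 := ℝ) (s, t))
  calc ∫ σ in x..x + ℓ, ∫ t in (0 : ℝ)..1, |fderiv ℝ u (σ, t) (1, 0)|
      ≤ √((x + ℓ - x) * (1 - 0)) *
          √(∫ σ in x..x + ℓ, ∫ t in (0 : ℝ)..1, fderiv ℝ u (σ, t) (1, 0) ^ 2) :=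
        intervalIntegral_intervalIntegral_abs_le_sqrt_mul_sqrt
          (f := fun s t => fderiv ℝ u (s, t) (1, 0)) (by fun_prop) (by linarith [hℓ.1]) zero_le_one
    _ ≤ √ℓ * √(∫ p in Ico (0 : ℝ) 1 ×ˢ Ico (0 : ℝ) 1, fderiv ℝ u p (1, 0) ^ 2) := by
        rw [add_sub_cancel_left, sub_zero, mul_one]
        gcongr
        exact intervalIntegral_strip_le_setIntegral_unitSquare
          (g := fun p => fderiv ℝ u p (1, 0) ^ 2) (by fun_prop) (fun _ => sq_nonneg _) hD_per x hℓ

/-- There is a universal constant `C > 0` (one may take `C = 2/3`)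
such that for every `u ∈ C¹(T²)` (a `ℤ²`-periodic `C¹` function on `ℝ²`), every
`φ ∈ C⁰(T)` with `‖φ‖_∞ ≤ 1`, every `x` and every `ℓ ∈ (0,1]`:
`|∫_T φ(t)u(x,t)dt| ≤ ℓ⁻¹‖u‖_{L¹(T²)} + C ℓ^{1/2} ‖u‖_{H¹(T²)}`. -/
theorem vertical_circle_H1_bound :
    ∃ C : ℝ, 0 < C ∧
      ∀ u : ℝ × ℝ → ℝ, ContDiff ℝ 1 u →
        (∀ x y : ℝ, u (x + 1, y) = u (x, y)) →
        (∀ x y : ℝ, u (x, y + 1) = u (x, y)) →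
        ∀ φ : ℝ → ℝ, Continuous φ → (∀ t, φ (t + 1) = φ t) → (∀ t, |φ t| ≤ 1) →
        ∀ x ℓ : ℝ, ℓ ∈ Set.Ioc (0:ℝ) 1 →
          |∫ t in (0:ℝ)..1, φ t * u (x, t)| ≤
            ℓ⁻¹ * (∫ p in Set.Ico (0:ℝ) 1 ×ˢ Set.Ico (0:ℝ) 1, |u p|) +
            C * Real.sqrt ℓ *
              Real.sqrt ((∫ p in Set.Ico (0:ℝ) 1 ×ˢ Set.Ico (0:ℝ) 1, (u p)^2) +
                (∫ p in Set.Ico (0:ℝ) 1 ×ˢ Set.Ico (0:ℝ) 1, (fderiv ℝ u p (1, 0))^2) +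
                (∫ p in Set.Ico (0:ℝ) 1 ×ˢ Set.Ico (0:ℝ) 1, (fderiv ℝ u p (0, 1))^2)) := by
  refine ⟨1, one_pos, fun u hu hu_per _ φ hφ _ hφ_le x ℓ hℓ => ?_⟩
  have hℓ' : ℓ ∈ Icc (0 : ℝ) 1 := ⟨hℓ.1.le, hℓ.2⟩
  calc |∫ t in (0:ℝ)..1, φ t * u (x, t)|
      ≤ ℓ⁻¹ * (∫ s in x..x + ℓ, |∫ t in (0:ℝ)..1, φ t * u (s, t)|) +
          ∫ σ in x..x + ℓ, ∫ t in (0:ℝ)..1, |fderiv ℝ u (σ, t) (1, 0)| :=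
        abs_intervalIntegral_mul_le_inv_mul_add hu hφ hφ_le zero_le_one x hℓ.1
    _ ≤ ℓ⁻¹ * (∫ p in Ico (0:ℝ) 1 ×ˢ Ico (0:ℝ) 1, |u p|) +
          √ℓ * √(∫ p in Ico (0:ℝ) 1 ×ˢ Ico (0:ℝ) 1, fderiv ℝ u p (1, 0) ^ 2) := by
        have := inv_pos.2 hℓ.1
        gcongr
        · exact intervalIntegral_strip_abs_intervalIntegral_mul_le hu.continuous hu_per hφ hφ_le
            x hℓ'
        · exact intervalIntegral_strip_abs_fderiv_le hu hu_per x hℓ'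
    _ ≤ _ := by
        rw [one_mul]
        gcongr
        exact le_add_of_le_of_nonneg (le_add_of_nonneg_left (integral_nonneg fun _ => sq_nonneg _))
          (integral_nonneg fun _ => sq_nonneg _)
end
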